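/- Let I : X → [0,∞], H̃ : X → ℝ^σ, s(u) = -inf{I(x) : H̃(x) = u}, g : ℝ^σ → ℝ continuous, and φ_g(β) = inf_{y} {I(y) + ⟨β,H̃(y)⟩ + g(H̃(y))}. Define 𝓔^u = {x : H̃(x) = u and I(x) = -s(u)} and 𝓔(g)_β = {x : I(x) + ⟨β,H̃(x)⟩ + g(H̃(x)) = φ_g(β)}. If s - g has a strictly supporting hyperplane at u ∈ dom s with normal vector [β,-1], i.e., s(v) - g(v) < s(u) - g(u) + ⟨β, v-u⟩ for all v ≠ u, then 𝓔^u = 𝓔(g)_β. -/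

import Mathlib

open scoped RealInnerProductSpace

/-- The microcanonical entropy `s(u) = -inf{I(x) : H̃(x) = u}`. -/
noncomputable def microEntropy {σ : ℕ} {X : Type*} (I : X → EReal)
    (H : X → EuclideanSpace ℝ (Fin σ)) (u : EuclideanSpace ℝ (Fin σ)) : EReal :=
  -sInf (I '' {x | H x = u})

/-- The set `𝓔^u` of microcanonical equilibrium macrostates: minimizers of `I`
subject to `H̃(x) = u`. -/
def microEquilibrium {σ : ℕ} {X : Type*} (I : X → EReal)
    (H : X → EuclideanSpace ℝ (Fin σ)) (u : EuclideanSpace ℝ (Fin σ)) : Set X :=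
  {x | H x = u ∧ ∀ y, H y = u → I x ≤ I y}

/-- The set `𝓔(g)_β` of generalized canonical equilibrium macrostates: minimizers
of `I(x) + ⟨β, H̃(x)⟩ + g(H̃(x))`. -/
def genCanonEquilibrium {σ : ℕ} {X : Type*} (I : X → EReal)
    (H : X → EuclideanSpace ℝ (Fin σ)) (g : EuclideanSpace ℝ (Fin σ) → ℝ)
    (β : EuclideanSpace ℝ (Fin σ)) : Set X :=
  {x | ∀ y, I x + ((⟪β, H x⟫ + g (H x) : ℝ) : EReal) ≤
    I y + ((⟪β, H y⟫ + g (H y) : ℝ) : EReal)}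

/-!
Write `ψ(v) = ⟨β, v⟩ + g(v)`, so that `𝓔(g)_β` is the set of minimizers of `I + ψ ∘ H̃`.
For `H̃(y) = v` we have `I(y) ≥ -s(v)`, and the strict support inequality turns this into
`I(y) + ψ(v) > -s(u) + ψ(u)` whenever `v ≠ u`. On the fiber `H̃ = u` the functional
`I + ψ ∘ H̃` is `I` shifted by the constant `ψ(u)`, with infimum `-s(u) + ψ(u)`. So the
penalized functional cannot be minimized off that fiber, and on it its minimizers are those of `I`.
-/

section

variable {σ : ℕ} {X : Type*} {I : X → EReal} {H : X → EuclideanSpace ℝ (Fin σ)}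

theorem isGLB_neg_microEntropy (u : EuclideanSpace ℝ (Fin σ)) :
    IsGLB (I '' {x | H x = u}) (-microEntropy I H u) := by
  rw [microEntropy, neg_neg]
  exact isGLB_sInf _

theorem neg_microEntropy_le (y : X) : -microEntropy I H (H y) ≤ I y :=
  (isGLB_neg_microEntropy (H y)).1 ⟨y, rfl, rfl⟩

theorem microEntropy_ne_top (hI : ∀ x, 0 ≤ I x) (u : EuclideanSpace ℝ (Fin σ)) :
    microEntropy I H u ≠ ⊤ := by
  have hglb : (0 : EReal) ≤ -microEntropy I H u :=
    (isGLB_neg_microEntropy u).2 (by rintro _ ⟨x, -, rfl⟩; exact hI x)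
  intro htop
  simp [htop] at hglb

theorem microEquilibrium_eq_of_forall_lt_penalized {u : EuclideanSpace ℝ (Fin σ)}
    {ψ : EuclideanSpace ℝ (Fin σ) → ℝ} {m : EReal} (hm : IsGLB (I '' {x | H x = u}) m)
    (hlt : ∀ y, H y ≠ u → m + ψ u < I y + ψ (H y)) :
    microEquilibrium I H u = {x | ∀ y, I x + ψ (H x) ≤ I y + ψ (H y)} := by
  ext x
  constructor
  · rintro ⟨hxu, hxmin⟩ y
    rw [hxu]
    by_cases hyu : H y = u
    · rw [hyu]
      gcongr
      exact hxmin y hyu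
    · have hxm : I x ≤ m := hm.2 (by rintro _ ⟨z, hz, rfl⟩; exact hxmin z hz)
      calc I x + ψ u ≤ m + ψ u := by gcongr
        _ ≤ I y + ψ (H y) := (hlt y hyu).le
  · intro hx
    have hsub : ∀ a c : EReal, a - ψ u ≤ c ↔ a ≤ c + ψ u := fun _ _ =>
      EReal.sub_le_iff_le_add (.inl (EReal.coe_ne_bot _)) (.inl (EReal.coe_ne_top _))
    have hxle : I x + ψ (H x) ≤ m + ψ u := by
      refine (hsub _ _).1 (hm.2 ?_)
      rintro _ ⟨z, hz, rfl⟩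
      rw [hsub, ← hz]
      exact hx z
    have hxu : H x = u := by
      by_contra hne
      exact (hlt x hne).not_ge hxle
    refine ⟨hxu, fun y hy => ?_⟩
    have hxy := hx y
    rw [hxu, hy] at hxy
    exact (EReal.addLECancellable_coe _).add_le_add_iff_right.mp hxy

theorem neg_microEntropy_add_lt_of_strictly_supporting {g : EuclideanSpace ℝ (Fin σ) → ℝ}
    {u β : EuclideanSpace ℝ (Fin σ)} (hu_bot : microEntropy I H u ≠ ⊥)
    (hu_top : microEntropy I H u ≠ ⊤)
    (hsupp : ∀ v, v ≠ u →
      microEntropy I H v - ((g v : ℝ) : EReal) <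
        microEntropy I H u - ((g u : ℝ) : EReal) + ((⟪β, v - u⟫ : ℝ) : EReal))
    {y : X} (hy : H y ≠ u) :
    -microEntropy I H u + ((⟪β, u⟫ + g u : ℝ) : EReal) <
      I y + ((⟪β, H y⟫ + g (H y) : ℝ) : EReal) := by
  lift microEntropy I H u to ℝ using ⟨hu_top, hu_bot⟩ with s hs
  set v := H y
  have hsv : microEntropy I H v < ((s - g u + ⟪β, v - u⟫ + g v : ℝ) : EReal) := by
    have h := EReal.add_lt_add_right_coe (hsupp v hy) (g v)
    rw [EReal.sub_add_cancel] at h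
    exact_mod_cast h
  have hIy := EReal.add_lt_add_right_coe
    ((EReal.neg_lt_neg_iff.2 hsv).trans_le (neg_microEntropy_le y)) (⟪β, v⟫ + g v)
  convert hIy using 1
  norm_cast
  rw [inner_sub_right]
  ring

end

theorem full_equivalence_of_strictly_supporting_general
    (σ : ℕ) (X : Type*)
    (I : X → EReal) (hIpos : ∀ x, 0 ≤ I x)
    (H : X → EuclideanSpace ℝ (Fin σ))
    (g : EuclideanSpace ℝ (Fin σ) → ℝ)
    (u β : EuclideanSpace ℝ (Fin σ)) (hu : microEntropy I H u ≠ ⊥)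
    (hsupp : ∀ v, v ≠ u →
      microEntropy I H v - ((g v : ℝ) : EReal) <
        microEntropy I H u - ((g u : ℝ) : EReal) + ((⟪β, v - u⟫ : ℝ) : EReal)) :
    microEquilibrium I H u = genCanonEquilibrium I H g β :=
  microEquilibrium_eq_of_forall_lt_penalized (ψ := fun v => ⟪β, v⟫ + g v)
    (isGLB_neg_microEntropy u)
    fun _ hy => neg_microEntropy_add_lt_of_strictly_supporting hu
      (microEntropy_ne_top hIpos u) hsupp hy

/-- if `s - g` has a strictly supporting hyperplane at `u ∈ dom s`
with normal vector `[β, -1]`, then `𝓔^u = 𝓔(g)_β` (full equivalence). -/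
theorem full_equivalence_of_strictly_supporting
    (σ : ℕ) (X : Type*) [MetricSpace X]
    (I : X → EReal) (hIpos : ∀ x, 0 ≤ I x) (hIlsc : LowerSemicontinuous I)
    (hIcpt : ∀ c : ℝ, IsCompact {x | I x ≤ ((c : ℝ) : EReal)})
    (H : X → EuclideanSpace ℝ (Fin σ)) (hH : Continuous H)
    (hHb : ∃ C : ℝ, ∀ x, ‖H x‖ ≤ C)
    (g : EuclideanSpace ℝ (Fin σ) → ℝ) (hg : Continuous g)
    (u β : EuclideanSpace ℝ (Fin σ)) (hu : microEntropy I H u ≠ ⊥)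
    (hsupp : ∀ v, v ≠ u →
      microEntropy I H v - ((g v : ℝ) : EReal) <
        microEntropy I H u - ((g u : ℝ) : EReal) + ((⟪β, v - u⟫ : ℝ) : EReal)) :
    microEquilibrium I H u = genCanonEquilibrium I H g β :=
  full_equivalence_of_strictly_supporting_general σ X I hIpos H g u β hu hsupp
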